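/- Let K ⊆ L be number fields with L a finite extension of K of degree n = [L : K], and let J be a nonzero ideal of the ring of integers O_K. If the extended ideal J·O_L is a principal ideal of O_L, then J^n is a principal ideal of O_K. -/

import Mathlib

open NumberField

theorem stmt_2_general (K L : Type*) [Field K] [Field L] [NumberField K] [NumberField L]
    [Algebra K L] (J : Ideal (𝓞 K))
    (h : (J.map (algebraMap (𝓞 K) (𝓞 L))).IsPrincipal) :
    (J ^ Module.finrank K L).IsPrincipal := by
  obtain ⟨x, hx⟩ := h
  refine ⟨Algebra.intNorm (𝓞 K) (𝓞 L) x, ?_⟩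
  rw [IsFractionRing.finrank_eq (𝓞 K) K (𝓞 L) L, ← Ideal.relNorm_algebraMap, hx,
    Ideal.submodule_span_eq, Ideal.relNorm_singleton]

/-- If `K ⊆ L` are number fields with `L` finite over `K` of degree `n = [L : K]`,
and `J` is a nonzero ideal of `𝓞 K` whose extension `J · 𝓞 L` is principal, then
`J ^ n` is a principal ideal of `𝓞 K`. -/
theorem stmt_2 (K L : Type*) [Field K] [Field L] [NumberField K] [NumberField L]
    [Algebra K L] [FiniteDimensional K L] (J : Ideal (𝓞 K)) (hJ : J ≠ ⊥)
    (h : (J.map (algebraMap (𝓞 K) (𝓞 L))).IsPrincipal) :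
    (J ^ Module.finrank K L).IsPrincipal :=
  stmt_2_general K L J h
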